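/- Let a > 0 and consider events in (d+1)-dimensional Minkowski spacetime (d ≥ 2): (x_A,t_A) = ((-a,0,...,0), 0), (x_C,t_C) = ((a,0,...,0), 0), and (x_B,t_B) = ((x_B, y_B, 0,...,0), t_B) with |x_B| ≥ a. Then L_>(x_A,t_A) ∩ L_>(x_C,t_C) ⊆ L_>(x_B,t_B) if and only if (x_A,t_A) ∈ L_≥(x_B,t_B) or (x_C,t_C) ∈ L_≥(x_B,t_B) (i.e. at least one of the first two events lies in the inclusive future lightcone of (x_B,t_B)). -/

import Mathlib

/-!
If the intersection of the cones of `A` and `C` lies in the cone of `B`, name the vertices so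
that the foot of `B` on the line `AC` lies beyond `C` as seen from `A` (`⟪C - B, C - A⟫ ≤ 0`;
this is where `|x_B| ≥ a` enters). Far out along the ray from `B` through `C`, the cone of `C`
is contained in that of `A` up to an error `‖C - A‖² / (2 s ‖C - B‖)` that vanishes as the
distance `s` grows, so points on the boundary of the cone of `C` there are almost in the
intersection. Being in the cone of `B` then forces `‖C - B‖ ≤ t₀ - t_B + ε` for every `ε > 0`.
The converse is the triangle inequality.
-/

open scoped InnerProductSpace

/-- The (strict) future lightcone of an event in (d+1)D Minkowski spacetime. -/
def futureCone {d : ℕ} (x0 : EuclideanSpace ℝ (Fin d)) (t0 : ℝ) :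
    Set (EuclideanSpace ℝ (Fin d) × ℝ) :=
  {p | ‖p.1 - x0‖ ≤ p.2 - t0 ∧ t0 < p.2}

namespace futureCone

variable {d : ℕ}

theorem subset_of_norm_sub_le {A B : EuclideanSpace ℝ (Fin d)} {t₀ tB : ℝ}
    (h : ‖A - B‖ ≤ t₀ - tB) : futureCone A t₀ ⊆ futureCone B tB := by
  rintro ⟨x, t⟩ ⟨hxA, ht⟩
  have := norm_sub_le_norm_sub_add_norm_sub x A B
  exact ⟨by dsimp only at *; linarith, by dsimp only at *; linarith [norm_nonneg (A - B)]⟩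

theorem add_smul_mem_inter {A C v : EuclideanSpace ℝ (Fin d)} {t₀ s ε : ℝ}
    (hs : 0 ≤ s) (hε : 0 < ε) (hinner : ⟪v, C - A⟫_ℝ ≤ 0)
    (hfar : ‖C - A‖ ^ 2 ≤ 2 * (s * ‖v‖) * ε) :
    (C + s • v, t₀ + s * ‖v‖ + ε) ∈ futureCone A t₀ ∩ futureCone C t₀ := by
  have hnorm : ‖s • v‖ = s * ‖v‖ := by rw [norm_smul, Real.norm_of_nonneg hs]
  have hpos : 0 ≤ s * ‖v‖ := by positivity
  have hA : ‖s • v + (C - A)‖ ^ 2 ≤ (s * ‖v‖ + ε) ^ 2 := by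
    rw [norm_add_sq_real, hnorm, real_inner_smul_left]
    nlinarith [mul_nonpos_of_nonneg_of_nonpos hs hinner]
  refine ⟨⟨?_, by dsimp only; linarith⟩, ⟨?_, by dsimp only; linarith⟩⟩
  · have hx : C + s • v - A = s • v + (C - A) := by abel
    rw [hx]
    linarith [abs_le_of_sq_le_sq' hA (by positivity)]
  · simp only [add_sub_cancel_left, hnorm]
    linarith

theorem norm_sub_le_of_inter_subset_of_sameRay {A B C v : EuclideanSpace ℝ (Fin d)}
    {t₀ tB : ℝ} (hv : v ≠ 0) (hray : SameRay ℝ (C - B) v) (hinner : ⟪v, C - A⟫_ℝ ≤ 0)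
    (hsub : futureCone A t₀ ∩ futureCone C t₀ ⊆ futureCone B tB) :
    ‖C - B‖ ≤ t₀ - tB := by
  have hvpos : 0 < ‖v‖ := norm_pos_iff.mpr hv
  refine le_sub_iff_add_le.mpr (le_of_forall_pos_le_add fun ε hε => ?_)
  set s := ‖C - A‖ ^ 2 / (2 * ‖v‖ * ε)
  have hs : 0 ≤ s := by positivity
  have hfar : ‖C - A‖ ^ 2 ≤ 2 * (s * ‖v‖) * ε := by
    rw [show 2 * (s * ‖v‖) * ε = s * (2 * ‖v‖ * ε) by ring, div_mul_cancel₀ _ (by positivity)]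
  have hB := (hsub (add_smul_mem_inter (t₀ := t₀) hs hε hinner hfar)).1
  have hx : C + s • v - B = (C - B) + s • v := by abel
  simp only [hx, (hray.nonneg_smul_right hs).norm_add, norm_smul, Real.norm_of_nonneg hs] at hB
  linarith

theorem norm_sub_le_of_inter_subset {A B C : EuclideanSpace ℝ (Fin d)} {t₀ tB : ℝ}
    (hAC : A ≠ C) (hinner : ⟪C - B, C - A⟫_ℝ ≤ 0)
    (hsub : futureCone A t₀ ∩ futureCone C t₀ ⊆ futureCone B tB) :
    ‖C - B‖ ≤ t₀ - tB := by
  by_cases hCB : C = B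
  · -- the ray from `B` through `C` is undefined; move away from `A` instead
    refine norm_sub_le_of_inter_subset_of_sameRay (sub_ne_zero.mpr hAC) ?_ ?_ hsub
    · rw [hCB, sub_self]
      exact SameRay.zero_left _
    · rw [← neg_sub, inner_neg_left, real_inner_self_eq_norm_sq]
      exact neg_nonpos.mpr (sq_nonneg _)
  · exact norm_sub_le_of_inter_subset_of_sameRay (sub_ne_zero.mpr hCB) SameRay.rfl hinner hsub

theorem inter_subset_iff {A B C : EuclideanSpace ℝ (Fin d)} {t₀ tB : ℝ} (hAC : A ≠ C)
    (hbeyond : ⟪A - B, A - C⟫_ℝ ≤ 0 ∨ ⟪C - B, C - A⟫_ℝ ≤ 0) :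
    futureCone A t₀ ∩ futureCone C t₀ ⊆ futureCone B tB ↔
      ‖A - B‖ ≤ t₀ - tB ∨ ‖C - B‖ ≤ t₀ - tB := by
  refine ⟨fun hsub => ?_, ?_⟩
  · rcases hbeyond with hA | hC
    · exact .inl (norm_sub_le_of_inter_subset hAC.symm hA (Set.inter_comm _ _ ▸ hsub))
    · exact .inr (norm_sub_le_of_inter_subset hAC hC hsub)
  · rintro (hA | hC)
    · exact Set.inter_subset_left.trans (subset_of_norm_sub_le hA)
    · exact Set.inter_subset_right.trans (subset_of_norm_sub_le hC)

end futureCone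

/-- For `x_A = (-a,0,…,0)`, `x_C = (a,0,…,0)` at time `0` and `x_B = (x_B, y_B, 0,…,0)` with
`|x_B| ≥ a`, the intersection of the future lightcones of the first two events is contained in
the future lightcone of `(x_B, t_B)` iff at least one of the first two events lies in the
inclusive future lightcone of `(x_B, t_B)`. -/
theorem inter_subset_cone_iff_of_outside {d : ℕ} (hd : 2 ≤ d) (a xB yB tB : ℝ)
    (ha : 0 < a) (hx : a ≤ |xB|) :
    (futureCone (EuclideanSpace.single (⟨0, by omega⟩ : Fin d) (-a)) 0 ∩
       futureCone (EuclideanSpace.single (⟨0, by omega⟩ : Fin d) a) 0 ⊆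
     futureCone
       (EuclideanSpace.single (⟨0, by omega⟩ : Fin d) xB +
        EuclideanSpace.single (⟨1, by omega⟩ : Fin d) yB) tB)
    ↔ (‖EuclideanSpace.single (⟨0, by omega⟩ : Fin d) (-a) -
          (EuclideanSpace.single (⟨0, by omega⟩ : Fin d) xB +
           EuclideanSpace.single (⟨1, by omega⟩ : Fin d) yB)‖ ≤ 0 - tB ∨
       ‖EuclideanSpace.single (⟨0, by omega⟩ : Fin d) a -
          (EuclideanSpace.single (⟨0, by omega⟩ : Fin d) xB +
           EuclideanSpace.single (⟨1, by omega⟩ : Fin d) yB)‖ ≤ 0 - tB) := by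
  set e₀ : Fin d := ⟨0, by omega⟩
  set e₁ : Fin d := ⟨1, by omega⟩
  have he : e₁ ≠ e₀ := by simp [e₀, e₁, Fin.ext_iff]
  have hAC : EuclideanSpace.single e₀ (-a) ≠ EuclideanSpace.single e₀ a := fun h => by
    have := congrArg (· e₀) h
    simp only [PiLp.single_eq_same] at this
    linarith
  apply futureCone.inter_subset_iff hAC
  simp only [inner_sub_left, inner_sub_right, inner_add_left, EuclideanSpace.inner_single_right,
    PiLp.single_eq_same, PiLp.single_eq_of_ne' _ he, conj_trivial]
  rcases le_abs'.mp hx with hxB | hxB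
  · exact .inl (by nlinarith)
  · exact .inr (by nlinarith)
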